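/- Let G be a finite simple connected graph on vertex set V, let v be a vertex of G, and let S = K[x_u : u ∈ V]. Set J = (x_u : u ∈ N_G(v)) + I_{G \ N_G[v]} and K = (x_v) + I_{G \ v}. Then I_G = J ∩ K. -/

import Mathlib

open MvPolynomial CategoryTheory

/-- The edge ideal of a simple graph. -/
noncomputable def edgeIdeal (K : Type) [Field K] {V : Type} (G : SimpleGraph V) :
    Ideal (MvPolynomial V K) :=
  Ideal.span {m | ∃ u v, G.Adj u v ∧ m = X u * X v}

/-- The ideal generated by the variables indexed by a set `A`. -/
noncomputable def varIdeal (K : Type) [Field K] {V : Type} (A : Set V) :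
    Ideal (MvPolynomial V K) :=
  Ideal.span ((fun v => (X v : MvPolynomial V K)) '' A)

/-- The edge ideal of the induced subgraph on `A`, inside the big polynomial ring. -/
noncomputable def edgeIdealOn (K : Type) [Field K] {V : Type} (G : SimpleGraph V) (A : Set V) :
    Ideal (MvPolynomial V K) :=
  Ideal.span {m | ∃ u v, G.Adj u v ∧ u ∈ A ∧ v ∈ A ∧ m = X u * X v}

/-- depth of the graded module `S/I` over `S = K[x_v : v ∈ V]`, with respect to the irrelevant
maximal ideal: the least `i` with `Ext^i(K, S/I) ≠ 0`. -/
noncomputable def depthQ (K : Type) [Field K] {V : Type} (I : Ideal (MvPolynomial V K)) : ℕ :=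
  sInf {i : ℕ |
    Nontrivial (((Ext (MvPolynomial V K) (ModuleCat (MvPolynomial V K)) i).obj
        (Opposite.op (ModuleCat.of (MvPolynomial V K)
          (MvPolynomial V K ⧸ varIdeal K (Set.univ : Set V))))).obj
      (ModuleCat.of (MvPolynomial V K) (MvPolynomial V K ⧸ I)))}

/-- The linear map `(v_j) ↦ ∑ v_j · g_j`. -/
noncomputable def combo {S : Type} [CommRing S] {n : ℕ} (g : Fin n → S) :
    (Fin n → S) →ₗ[S] S where
  toFun v := ∑ j, v j * g j
  map_add' u v := by simp [add_mul, Finset.sum_add_distrib]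
  map_smul' c v := by simp [Finset.mul_sum, mul_assoc]

/-- A (finite) graded free resolution of `S/I` over `S = K[x_v : v ∈ V]`:
`0 → F_len → ⋯ → F_1 → F_0 → S/I → 0`, where `F_i = ⊕_j S(-tw i j)` and all maps are
homogeneous of degree `0`. -/
structure GradedFreeResQ (K : Type) [Field K] {V : Type} (I : Ideal (MvPolynomial V K)) where
  rk : ℕ → ℕ
  tw : (i : ℕ) → Fin (rk i) → ℕ
  len : ℕ
  vanish : ∀ i, len < i → rk i = 0
  gen : Fin (rk 0) → MvPolynomial V K
  gen_hom : ∀ j, (gen j).IsHomogeneous (tw 0 j)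
  mat : (i : ℕ) → Matrix (Fin (rk i)) (Fin (rk (i+1))) (MvPolynomial V K)
  mat_hom : ∀ i a b, mat i a b = 0 ∨
    ∃ d, tw (i+1) b = tw i a + d ∧ (mat i a b).IsHomogeneous d
  aug_surj : Function.Surjective
    ((I.mkQ).comp (combo gen))
  exact0 : LinearMap.ker ((I.mkQ).comp (combo gen)) = LinearMap.range (Matrix.toLin' (mat 0))
  exact : ∀ i, LinearMap.ker (Matrix.toLin' (mat i)) =
    LinearMap.range (Matrix.toLin' (mat (i+1)))

/-- Castelnuovo–Mumford regularity of `S/I`: the minimum over all finite graded free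
resolutions of `S/I` of `max_{i,j} (tw i j - i)`. -/
noncomputable def regQ (K : Type) [Field K] {V : Type} (I : Ideal (MvPolynomial V K)) : ℤ :=
  sInf {r : ℤ | ∃ F : GradedFreeResQ K I, ∀ i (j : Fin (F.rk i)), (F.tw i j : ℤ) - i ≤ r}

/-- A (finite) graded free resolution of a homogeneous ideal `I ⊆ S`. -/
structure GradedFreeResId (K : Type) [Field K] {V : Type} (I : Ideal (MvPolynomial V K)) where
  rk : ℕ → ℕ
  tw : (i : ℕ) → Fin (rk i) → ℕ
  len : ℕ
  vanish : ∀ i, len < i → rk i = 0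
  gen : Fin (rk 0) → MvPolynomial V K
  gen_hom : ∀ j, (gen j).IsHomogeneous (tw 0 j)
  gen_span : Ideal.span (Set.range gen) = I
  mat : (i : ℕ) → Matrix (Fin (rk i)) (Fin (rk (i+1))) (MvPolynomial V K)
  mat_hom : ∀ i a b, mat i a b = 0 ∨
    ∃ d, tw (i+1) b = tw i a + d ∧ (mat i a b).IsHomogeneous d
  exact0 : LinearMap.ker (combo gen) = LinearMap.range (Matrix.toLin' (mat 0))
  exact : ∀ i, LinearMap.ker (Matrix.toLin' (mat i)) =
    LinearMap.range (Matrix.toLin' (mat (i+1)))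

/-- Castelnuovo–Mumford regularity of a homogeneous ideal `I`. -/
noncomputable def regId (K : Type) [Field K] {V : Type} (I : Ideal (MvPolynomial V K)) : ℤ :=
  sInf {r : ℤ | ∃ F : GradedFreeResId K I, ∀ i (j : Fin (F.rk i)), (F.tw i j : ℤ) - i ≤ r}

/-- The data defining a `k`-fan graph `F_k^W(K_n)`: the partition `W = W_1 ⊔ ⋯ ⊔ W_k` of a
subset of `[n]` (the block `W i` is enumerated by `w i`, with `r i = |W i|`), and the sizes
`a i j` of the cliques attached along each block. -/
structure FanData (n k : ℕ) where
  r : Fin k → ℕ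
  rpos : ∀ i, 1 ≤ r i
  w : (i : Fin k) → Fin (r i) → Fin n
  winj : Function.Injective (fun p : Σ i : Fin k, Fin (r i) => w p.1 p.2)
  a : (i : Fin k) → (j : Fin (r i)) → ℕ
  agt : ∀ i (j : Fin (r i)), (j : ℕ) + 1 < a i j

/-- `h_{i,j} = a_{i,j} - j` (with `j` 1-indexed) is the number of new vertices of the clique
`K_{a_{i,j}}`. -/
def FanData.h {n k : ℕ} (D : FanData n k) (i : Fin k) (j : Fin (D.r i)) : ℕ :=
  D.a i j - ((j : ℕ) + 1)

/-- The vertex set of the fan graph: the vertices of `K_n` plus the new vertices of all the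
attached cliques. -/
def FanVert {n k : ℕ} (D : FanData n k) : Type :=
  Fin n ⊕ Σ i : Fin k, Σ j : Fin (D.r i), Fin (D.h i j)

/-- Membership in (the vertex set of) the clique `K_{a_{i,j}}`. -/
def FanData.inClique {n k : ℕ} (D : FanData n k) (i : Fin k) (j : Fin (D.r i))
    (x : FanVert D) : Prop :=
  (∃ l : Fin (D.r i), l ≤ j ∧ x = Sum.inl (D.w i l)) ∨ (∃ m, x = Sum.inr ⟨i, j, m⟩)

/-- The fan graph `F_k^W(K_n)`: two distinct vertices are adjacent iff they both lie in `K_n`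
or both lie in one of the attached cliques. -/
def fanGraph {n k : ℕ} (D : FanData n k) : SimpleGraph (FanVert D) where
  Adj u v := u ≠ v ∧ ((∃ x y, u = Sum.inl x ∧ v = Sum.inl y) ∨
    ∃ i j, D.inClique i j u ∧ D.inClique i j v)
  symm := by
    constructor
    rintro u v ⟨h1, h2⟩
    refine ⟨Ne.symm h1, ?_⟩
    rcases h2 with ⟨x, y, hx, hy⟩ | ⟨i, j, hu, hv⟩
    exacts [Or.inl ⟨y, x, hy, hx⟩, Or.inr ⟨i, j, hv, hu⟩]
  loopless := by constructor; rintro u ⟨h, -⟩; exact h rfl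

/-- The set `W ⊆ [n]` on which the fans are attached. -/
def FanData.W {n k : ℕ} (D : FanData n k) : Set (Fin n) :=
  Set.range fun p : Σ i : Fin k, Fin (D.r i) => D.w p.1 p.2

/-- `|W| = ∑ᵢ |Wᵢ|`. -/
def FanData.cardW {n k : ℕ} (D : FanData n k) : ℕ := ∑ i, D.r i

/-- Gluing two graphs: delete `A₁ ⊆ V₁` and `A₂ ⊆ V₂` and add a new vertex (`none`) whose
neighbors are those of `g₁` in `G₁` and of `g₂` in `G₂` (among the remaining vertices). -/
def glue {V₁ V₂ : Type} (G₁ : SimpleGraph V₁) (G₂ : SimpleGraph V₂)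
    (A₁ : Set V₁) (g₁ : V₁) (A₂ : Set V₂) (g₂ : V₂) :
    SimpleGraph (Option ({x : V₁ // x ∉ A₁} ⊕ {x : V₂ // x ∉ A₂})) where
  Adj u v := match u, v with
    | some (Sum.inl a), some (Sum.inl b) => G₁.Adj a b
    | some (Sum.inr a), some (Sum.inr b) => G₂.Adj a b
    | none, some (Sum.inl b) => G₁.Adj g₁ b
    | none, some (Sum.inr b) => G₂.Adj g₂ b
    | some (Sum.inl a), none => G₁.Adj g₁ a
    | some (Sum.inr a), none => G₂.Adj g₂ a
    | _, _ => False
  symm := by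
    constructor
    rintro (_ | (a | a)) (_ | (b | b)) h <;>
      first | exact h | exact h.symm
  loopless := by
    constructor
    rintro (_ | (a | a)) h
    · exact h
    · exact G₁.loopless.irrefl _ h
    · exact G₂.loopless.irrefl _ h

/-- The `∘` operation: remove the leaves `f₁, f₂` and identify their neighbors `v₁, v₂`. -/
def circGlue {V₁ V₂ : Type} (G₁ : SimpleGraph V₁) (G₂ : SimpleGraph V₂)
    (f₁ v₁ : V₁) (f₂ v₂ : V₂) :=
  glue G₁ G₂ {f₁, v₁} v₁ {f₂, v₂} v₂

/-- The `*` operation: identify the leaves `f₁` and `f₂`. -/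
def starGlue {V₁ V₂ : Type} (G₁ : SimpleGraph V₁) (G₂ : SimpleGraph V₂)
    (f₁ : V₁) (f₂ : V₂) :=
  glue G₁ G₂ {f₁} f₁ {f₂} f₂

/-- The clique sum `G ∪_v P₂`: attach a pendant edge (a new leaf `none`) at the vertex `v`. -/
def addPendant {V : Type} (G : SimpleGraph V) (v : V) : SimpleGraph (Option V) where
  Adj u u' := match u, u' with
    | some a, some b => G.Adj a b
    | none, some b => b = v
    | some a, none => a = v
    | none, none => False
  symm := by constructor; rintro (_ | a) (_ | b) h <;> first | exact h | exact h.symm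
  loopless := by
    constructor
    rintro (_ | a) h
    · exact h
    · exact G.loopless.irrefl _ h

/-- An induced matching: a set of edges of `G` such that the induced subgraph on its vertices
contains no other edges. -/
def IsInducedMatching {V : Type} (G : SimpleGraph V) (M : Finset (Sym2 V)) : Prop :=
  ↑M ⊆ G.edgeSet ∧
    ∀ e ∈ M, ∀ e' ∈ M, e ≠ e' → ∀ u ∈ e, ∀ v ∈ e', u ≠ v ∧ ¬ G.Adj u v

/-- The induced matching number `ϑ(G)`. -/
noncomputable def indMatchNum {V : Type} (G : SimpleGraph V) : ℕ :=
  sSup {m : ℕ | ∃ M : Finset (Sym2 V), IsInducedMatching G M ∧ M.card = m}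

/-- A graph is chordal if it has no induced cycle of length `≥ 4`. -/
def IsChordal {V : Type} (G : SimpleGraph V) : Prop :=
  ∀ n : ℕ, 4 ≤ n → IsEmpty (SimpleGraph.cycleGraph n ↪g G)

/-- `C` is a vertex cover of `G`. -/
def IsVertexCover {V : Type} (G : SimpleGraph V) (C : Set V) : Prop :=
  ∀ u v, G.Adj u v → u ∈ C ∨ v ∈ C

instance {n k : ℕ} (D : FanData n k) : Fintype (FanVert D) :=
  inferInstanceAs (Fintype (Fin n ⊕ Σ i : Fin k, Σ j : Fin (D.r i), Fin (D.h i j)))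

/-- The last index of the branch on the block `W i`, i.e. the index of `K_{a_{i,r_i}}`. -/
def FanData.lastIdx {n k : ℕ} (D : FanData n k) (i : Fin k) : Fin (D.r i) :=
  ⟨D.r i - 1, Nat.sub_lt (D.rpos i) one_pos⟩

/-- `p = |{(i,j) : h_{i,j} ≥ 2}|`. -/
noncomputable def FanData.p {n k : ℕ} (D : FanData n k) : ℕ :=
  (Finset.univ.filter (fun q : Σ i : Fin k, Fin (D.r i) => 2 ≤ D.h q.1 q.2)).card

/-- `T = max{|W_1|, …, |W_k|}`. -/
def FanData.maxBlock {n k : ℕ} (D : FanData n k) : ℕ := Finset.univ.sup D.r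

/-- `T' = max{|W_{i₀}| - 1, |W_i| (i ≠ i₀)}`. -/
def FanData.maxBlock' {n k : ℕ} (D : FanData n k) (i₀ : Fin k) : ℕ :=
  Finset.univ.sup (Function.update D.r i₀ (D.r i₀ - 1))

/-!
`I_G ⊆ J ∩ K` because every edge either meets `N(v)` or avoids `N[v]`, and either contains `v`
or avoids it. Conversely, write `f ∈ J ∩ K` as `f = g x_v + h` with `h ∈ I_{G \ v} ⊆ I_G ⊆ J`.
Then `g x_v ∈ J`, and since `J` is generated by polynomials not involving `x_v`, `x_v` is a
nonzerodivisor modulo `J`, so `g ∈ J`. Finally `x_v J ⊆ I_G`, as `x_v x_u` is an edge for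
`u ∈ N(v)`; hence `f ∈ I_G`.
-/

namespace MvPolynomial

variable {R σ : Type*} [CommSemiring R] [DecidableEq σ]

noncomputable def asPolynomialIn (v : σ) : MvPolynomial σ R →+* Polynomial (MvPolynomial σ R) :=
  eval₂Hom (Polynomial.C.comp C) fun u => if u = v then Polynomial.X else Polynomial.C (X u)

lemma asPolynomialIn_X_self (v : σ) : asPolynomialIn v (X v : MvPolynomial σ R) = Polynomial.X := by
  simp [asPolynomialIn]

lemma asPolynomialIn_of_notMem_vars {v : σ} {p : MvPolynomial σ R} (hp : v ∉ p.vars) :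
    asPolynomialIn v p = Polynomial.C p := by
  refine hom_congr_vars (f₂ := Polynomial.C) (by ext; simp [asPolynomialIn]) ?_ rfl
  intro u hu _
  have huv : u ≠ v := fun h => hp (h ▸ hu)
  simp [asPolynomialIn, huv]

lemma eval_X_asPolynomialIn (v : σ) (p : MvPolynomial σ R) :
    (asPolynomialIn v p).eval (X v) = p := by
  induction p using MvPolynomial.induction_on with
  | C a => simp [asPolynomialIn]
  | add p q hp hq => simp [hp, hq]
  | mul_X p u hp =>
    rw [map_mul, Polynomial.eval_mul, hp]
    by_cases h : u = v
    · subst h; simp [asPolynomialIn_X_self]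
    · simp [asPolynomialIn, h]

lemma coeff_asPolynomialIn_mem_span {v : σ} {T : Set (MvPolynomial σ R)}
    (hT : ∀ t ∈ T, v ∉ t.vars) {p : MvPolynomial σ R} (hp : p ∈ Ideal.span T) (n : ℕ) :
    (asPolynomialIn v p).coeff n ∈ Ideal.span T := by
  induction hp using Submodule.span_induction generalizing n with
  | mem t ht =>
    rw [asPolynomialIn_of_notMem_vars (hT t ht), Polynomial.coeff_C]
    split_ifs
    exacts [Ideal.subset_span ht, zero_mem _]
  | zero => simp
  | add p q _ _ hp hq => simpa using add_mem (hp n) (hq n)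
  | smul r p _ hp =>
    rw [smul_eq_mul, map_mul, Polynomial.coeff_mul]
    exact Ideal.sum_mem _ fun ij _ => Ideal.mul_mem_left _ _ (hp ij.2)

/-- The coefficients of `p`, as a polynomial in `X v`, are shifted coefficients of `X v * p`. -/
lemma mem_span_of_X_mul_mem_span {v : σ} {T : Set (MvPolynomial σ R)}
    (hT : ∀ t ∈ T, v ∉ t.vars) {p : MvPolynomial σ R} (hp : X v * p ∈ Ideal.span T) :
    p ∈ Ideal.span T := by
  have hcoeff (n : ℕ) : (asPolynomialIn v p).coeff n ∈ Ideal.span T := by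
    simpa [asPolynomialIn_X_self] using coeff_asPolynomialIn_mem_span hT hp (n + 1)
  rw [← eval_X_asPolynomialIn v p, Polynomial.eval_eq_sum_range]
  exact Ideal.sum_mem _ fun n _ => Ideal.mul_mem_right _ _ (hcoeff n)

end MvPolynomial

section EdgeIdeal

variable {K : Type} [Field K] {V : Type} (G : SimpleGraph V)

lemma edgeIdealOn_le_edgeIdeal (B : Set V) : edgeIdealOn K G B ≤ edgeIdeal K G :=
  Ideal.span_mono fun _ ⟨a, b, hab, _, _, hm⟩ => ⟨a, b, hab, hm⟩

lemma edgeIdeal_le_varIdeal_add_edgeIdealOn {A B : Set V}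
    (hAB : ∀ a b, G.Adj a b → a ∈ A ∨ b ∈ A ∨ a ∈ B ∧ b ∈ B) :
    edgeIdeal K G ≤ varIdeal K A + edgeIdealOn K G B := by
  rw [edgeIdeal, Ideal.span_le]
  rintro _ ⟨a, b, hab, rfl⟩
  rcases hAB a b hab with ha | hb | ⟨ha, hb⟩
  · exact Ideal.mem_sup_left (Ideal.mul_mem_right _ _ (Ideal.subset_span ⟨a, ha, rfl⟩))
  · exact Ideal.mem_sup_left (Ideal.mul_mem_left _ _ (Ideal.subset_span ⟨b, hb, rfl⟩))
  · exact Ideal.mem_sup_right (Ideal.subset_span ⟨a, b, hab, ha, hb, rfl⟩)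

lemma mem_of_X_mul_mem_varIdeal_add_edgeIdealOn {v : V} {A B : Set V} (hA : v ∉ A) (hB : v ∉ B)
    {p : MvPolynomial V K} (hp : X v * p ∈ varIdeal K A + edgeIdealOn K G B) :
    p ∈ varIdeal K A + edgeIdealOn K G B := by
  classical
  rw [varIdeal, edgeIdealOn, Submodule.add_eq_sup, ← Ideal.span_union] at hp ⊢
  refine MvPolynomial.mem_span_of_X_mul_mem_span ?_ hp
  rintro _ (⟨u, hu, rfl⟩ | ⟨a, b, -, ha, hb, rfl⟩) hv
  · rw [vars_X, Finset.mem_singleton] at hv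
    exact hA (hv ▸ hu)
  · rcases Finset.mem_union.mp (vars_mul _ _ hv) with hv | hv <;>
      rw [vars_X, Finset.mem_singleton] at hv <;> subst hv <;> contradiction

lemma varIdeal_add_edgeIdealOn_le_colon (v : V) (B : Set V) :
    varIdeal K (G.neighborSet v) + edgeIdealOn K G B ≤ (edgeIdeal K G).colon {X v} := by
  refine sup_le ?_ ((edgeIdealOn_le_edgeIdeal G B).trans fun p hp => ?_)
  · rw [varIdeal, Ideal.span_le]
    rintro _ ⟨u, hu, rfl⟩
    rw [SetLike.mem_coe, Submodule.mem_colon_singleton, smul_eq_mul]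
    exact Ideal.subset_span ⟨u, v, hu.symm, rfl⟩
  · rw [Submodule.mem_colon_singleton, smul_eq_mul]
    exact Ideal.mul_mem_right _ _ hp

lemma edgeIdeal_le_varIdeal_neighborSet_add (v : V) :
    edgeIdeal K G ≤
      varIdeal K (G.neighborSet v) + edgeIdealOn K G (insert v (G.neighborSet v))ᶜ := by
  refine edgeIdeal_le_varIdeal_add_edgeIdealOn G fun a b hab => ?_
  by_cases ha : G.Adj v a
  · exact Or.inl ha
  by_cases hb : G.Adj v b
  · exact Or.inr (Or.inl hb)
  refine Or.inr (Or.inr ⟨?_, ?_⟩) <;> rintro (rfl | h)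
  exacts [hb hab, ha h, ha hab.symm, hb h]

lemma edgeIdeal_le_varIdeal_singleton_add (v : V) :
    edgeIdeal K G ≤ varIdeal K {v} + edgeIdealOn K G {v}ᶜ :=
  edgeIdeal_le_varIdeal_add_edgeIdealOn G fun a b _ => by
    by_cases ha : a = v <;> by_cases hb : b = v <;> simp [ha, hb]

end EdgeIdeal

theorem stmt1_general {V : Type} (K : Type) [Field K] (G : SimpleGraph V) (v : V) :
    edgeIdeal K G =
      (varIdeal K (G.neighborSet v) + edgeIdealOn K G ((insert v (G.neighborSet v))ᶜ)) ⊓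
      (varIdeal K ({v} : Set V) + edgeIdealOn K G (({v} : Set V)ᶜ)) := by
  refine le_antisymm (le_inf (edgeIdeal_le_varIdeal_neighborSet_add G v)
    (edgeIdeal_le_varIdeal_singleton_add G v)) ?_
  rintro f ⟨hfJ, hfK⟩
  obtain ⟨_, hy, h, hh, rfl⟩ := Submodule.mem_sup.mp hfK
  obtain ⟨g, rfl⟩ := Ideal.mem_span_singleton'.mp (by simpa [varIdeal] using hy)
  have hhJ := edgeIdeal_le_varIdeal_neighborSet_add G v (edgeIdealOn_le_edgeIdeal G _ hh)
  have hgJ := mem_of_X_mul_mem_varIdeal_add_edgeIdealOn G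
    (A := G.neighborSet v) (B := (insert v (G.neighborSet v))ᶜ)
    (G.loopless.irrefl v) (fun hv => hv (Set.mem_insert v _))
    (by simpa only [add_sub_cancel_right, mul_comm g] using sub_mem hfJ hhJ)
  have hgX : g * X v ∈ edgeIdeal K G := by
    simpa only [Submodule.mem_colon_singleton, smul_eq_mul] using
      varIdeal_add_edgeIdealOn_le_colon G v _ hgJ
  exact add_mem hgX (edgeIdealOn_le_edgeIdeal G _ hh)

/-- `I_G = J ∩ K`. -/
theorem stmt1 {V : Type} [Fintype V] (K : Type) [Field K] (G : SimpleGraph V)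
    (hconn : G.Connected) (v : V) :
    edgeIdeal K G =
      (varIdeal K (G.neighborSet v) + edgeIdealOn K G ((insert v (G.neighborSet v))ᶜ)) ⊓
      (varIdeal K ({v} : Set V) + edgeIdealOn K G (({v} : Set V)ᶜ)) :=
  stmt1_general K G v
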